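/- arXiv:2305.19882 — 2 statements merged into one kernel-verified Lean document; each statement's English description precedes it below -/
import Mathlib

section
/- No set of more than 32 squares on the 8×8 chessboard is knight-independent: any set of squares, no two of which are a knight's move apart, has at most 32 elements. -/
/-!
Pair every square with a square a knight's move away: the partner of `(x, y)` is
`(x xor 1, y xor 2)`, which swaps the two rows and shifts by two columns inside each aligned
`2 × 4` block. This splits the 64 squares into 32 knight-move pairs, and a knight-independent
set meets each pair at most once.
-/

open Finset

/-- Two squares are a knight's move apart. -/
def KnightMove (p q : Fin 8 × Fin 8) : Prop :=
  (((p.1 : ℤ) - (q.1 : ℤ)).natAbs = 1 ∧ ((p.2 : ℤ) - (q.2 : ℤ)).natAbs = 2) ∨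
  (((p.1 : ℤ) - (q.1 : ℤ)).natAbs = 2 ∧ ((p.2 : ℤ) - (q.2 : ℤ)).natAbs = 1)

theorem two_mul_card_le_card_of_injective {α : Type*} [Fintype α] [DecidableEq α]
    {σ : α → α} (hσ : Function.Injective σ) {S : Finset α} (hS : ∀ a ∈ S, σ a ∉ S) :
    2 * #S ≤ Fintype.card α := by
  have hdisj : Disjoint S (S.image σ) := by
    rw [disjoint_left]
    intro a ha ha'
    obtain ⟨b, hb, rfl⟩ := mem_image.mp ha'
    exact hS b hb ha
  calc 2 * #S = #S + #(S.image σ) := by rw [card_image_of_injective S hσ, two_mul]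
    _ = #(S ∪ S.image σ) := (card_union_of_disjoint hdisj).symm
    _ ≤ Fintype.card α := card_le_univ _

def knightPartner (p : Fin 8 × Fin 8) : Fin 8 × Fin 8 := (p.1 ^^^ 1, p.2 ^^^ 2)

theorem knightPartner_knightPartner (p : Fin 8 × Fin 8) :
    knightPartner (knightPartner p) = p := by
  have xor_xor : ∀ x : Fin 8, ∀ k : Fin 8, x ^^^ k ^^^ k = x := by decide
  simp only [knightPartner, xor_xor]

theorem knightPartner_injective : Function.Injective knightPartner :=
  Function.LeftInverse.injective knightPartner_knightPartner

theorem knightMove_knightPartner (p : Fin 8 × Fin 8) : KnightMove p (knightPartner p) := by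
  have hx : ∀ x : Fin 8, ((x : ℤ) - ((x ^^^ 1 : Fin 8) : ℤ)).natAbs = 1 := by decide
  have hy : ∀ y : Fin 8, ((y : ℤ) - ((y ^^^ 2 : Fin 8) : ℤ)).natAbs = 2 := by decide
  exact Or.inl ⟨hx p.1, hy p.2⟩

theorem knightPartner_ne (p : Fin 8 × Fin 8) : knightPartner p ≠ p := fun h => by
  simpa [h, KnightMove] using knightMove_knightPartner p

theorem knight_independent_le_32 (S : Finset (Fin 8 × Fin 8))
    (h : ∀ p ∈ S, ∀ q ∈ S, p ≠ q → ¬ KnightMove p q) :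
    S.card ≤ 32 := by
  have hS : ∀ p ∈ S, knightPartner p ∉ S := fun p hp hq =>
    h p hp _ hq (knightPartner_ne p).symm (knightMove_knightPartner p)
  have hcard := two_mul_card_le_card_of_injective knightPartner_injective hS
  simp only [Fintype.card_prod, Fintype.card_fin] at hcard
  omega
end

section
/- The maximum number of pairwise non-attacking knights on an 8×8 chessboard is exactly 32. -/
open Finset

theorem two_mul_card_le_of_injective_of_rel {α : Type*} [Fintype α] [DecidableEq α]
    {R : α → α → Prop} {σ : α → α} (hσ : Function.Injective σ) (hR : ∀ x, R x (σ x))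
    {S : Finset α} (hS : ∀ p ∈ S, ∀ q ∈ S, ¬ R p q) :
    2 * #S ≤ Fintype.card α := by
  have hdisj : Disjoint S (S.image σ) := by
    refine disjoint_left.mpr fun q hqS hqσ => ?_
    obtain ⟨p, hpS, rfl⟩ := mem_image.mp hqσ
    exact hS p hpS (σ p) hqS (hR p)
  calc 2 * #S = #(S ∪ S.image σ) := by
        rw [card_union_of_disjoint hdisj, card_image_of_injective S hσ, two_mul]
    _ ≤ Fintype.card α := card_le_univ _

theorem KnightMove.add_mod_two_ne {p q : Fin 8 × Fin 8} (h : KnightMove p q) :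
    ((p.1 : ℕ) + p.2) % 2 ≠ ((q.1 : ℕ) + q.2) % 2 := by
  unfold KnightMove at h
  omega

def darkSquares : Finset (Fin 8 × Fin 8) :=
  univ.filter fun p => ((p.1 : ℕ) + p.2) % 2 = 0

theorem card_darkSquares : #darkSquares = 32 := by decide

theorem not_knightMove_of_mem_darkSquares {p q : Fin 8 × Fin 8}
    (hp : p ∈ darkSquares) (hq : q ∈ darkSquares) : ¬ KnightMove p q := by
  simp only [darkSquares, mem_filter, mem_univ, true_and] at hp hq
  exact fun h => h.add_mod_two_ne (hp.trans hq.symm)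

theorem knightPartner_involutive : Function.Involutive knightPartner := by
  intro p
  have h1 : ∀ i : Fin 8, i ^^^ 1 ^^^ 1 = i := by decide
  have h2 : ∀ j : Fin 8, j ^^^ 2 ^^^ 2 = j := by decide
  simp only [knightPartner, h1, h2]

theorem max_nonattacking_knights :
    (∃ S : Finset (Fin 8 × Fin 8), S.card = 32 ∧
        ∀ p ∈ S, ∀ q ∈ S, ¬ KnightMove p q) ∧
    (∀ S : Finset (Fin 8 × Fin 8),
        (∀ p ∈ S, ∀ q ∈ S, ¬ KnightMove p q) → S.card ≤ 32) := by
  refine ⟨⟨darkSquares, card_darkSquares, fun p hp q hq => not_knightMove_of_mem_darkSquares hp hq⟩,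
    fun S hS => ?_⟩
  have h := two_mul_card_le_of_injective_of_rel knightPartner_involutive.injective
    knightMove_knightPartner hS
  simp only [Fintype.card_prod, Fintype.card_fin] at h
  omega
end
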